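/- Let h ≥ 0, p > 0, μ̄ > 0 and c ∈ ℝ (risk-neutral consumer, r = 0). Then inf_{z ∈ ℝ} { F₀(h + p(z − c)²) + μ̄ (z⁻ + c)² } = F₀(h) + μ̄ c² · 𝟙_{c ≥ 0}, and the infimum is attained at z = c. Consequently (1/2) μ̄ c² − (1/2) inf_{z ∈ ℝ} { F₀(h + p(z − c)²) + μ̄ (z⁻ + c)² } = (1/2) μ̄ (c⁻)² + H_v(−h), so that with a risk-neutral consumer the second-best HJB nonlinearity coincides with the first-best one. -/

import Mathlib

/-!
The function `φ` is the lower envelope `φ(a) = min_{t ∈ [ε,1]} (1/t - 1 + a t)`, the minimum being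
attained at `t = 1`, `t = a^{-1/2}` or `t = ε` according to the three branches of `φ`. Minimising
coordinatewise gives `F₀(q) = min_{b ∈ B} (c₂(b) + q |σ(b)|²)`, i.e. `F₀(h) = -2 H_v(-h)`, and `F₀` is
nondecreasing as a minimum of nondecreasing affine functions. Hence `z = c` minimises both terms of
the second-best objective: `h + p(z - c)² ≥ h`, and `(z⁻ + c)² ≥ (c⁺)² = (c⁻ + c)²`.
-/

open Set

lemma isLeast_sum_image_pi {ι M : Type*} [Fintype ι] [AddCommMonoid M] [PartialOrder M]
    [IsOrderedAddMonoid M] {α : ι → Type*} {f : ∀ i, α i → M} {S : ∀ i, Set (α i)} {m : ι → M}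
    (h : ∀ i, IsLeast (f i '' S i) (m i)) :
    IsLeast ((fun b => ∑ i, f i (b i)) '' univ.pi S) (∑ i, m i) := by
  choose b hbS hb using fun i => (h i).1
  refine ⟨⟨b, mem_univ_pi.2 hbS, by simp only [hb]⟩, forall_mem_image.2 fun x hx => ?_⟩
  exact Finset.sum_le_sum fun i _ => (h i).2 ⟨x i, mem_univ_pi.1 hx i, rfl⟩

noncomputable def phi (ε x : ℝ) : ℝ :=
  if x ≤ 1 then x else if x < (ε ^ 2)⁻¹ then 2 * Real.sqrt x - 1 else ε * x + ε⁻¹ - 1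

noncomputable def phiMinimizer (ε a : ℝ) : ℝ :=
  if a ≤ 1 then 1 else if a < (ε ^ 2)⁻¹ then (Real.sqrt a)⁻¹ else ε

section Envelope

variable {ε : ℝ} (hε0 : 0 < ε) (hε1 : ε < 1)
include hε0

lemma phi_le_of_mem_Icc {a t : ℝ} (ht : t ∈ Icc ε 1) : phi ε a ≤ 1 / t - 1 + a * t := by
  obtain ⟨hεt, ht1⟩ := ht
  have ht0 : 0 < t := hε0.trans_le hεt
  unfold phi
  split_ifs with ha1 haE
  · have : 0 ≤ (1 - t) * (1 / t - a) :=
      mul_nonneg (by linarith) (by rw [one_div, sub_nonneg]; exact ha1.trans (one_le_inv₀ ht0 |>.2 ht1))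
    nlinarith [show (1 - t) * (1 / t - a) = 1 / t - 1 + a * t - a by field_simp; ring]
  · -- AM-GM: `1/t + a t ≥ 2 √a`
    have hs2 : Real.sqrt a ^ 2 = a := Real.sq_sqrt (by linarith)
    have : 0 ≤ (1 - Real.sqrt a * t) ^ 2 / t := by positivity
    nlinarith [show (1 - Real.sqrt a * t) ^ 2 / t = 1 / t - 2 * Real.sqrt a + a * t by
      field_simp; linear_combination t ^ 2 * hs2]
  · rw [not_le] at ha1
    rw [not_lt] at haE
    have haεt : 1 ≤ a * ε * t := by
      calc (1 : ℝ) = (ε ^ 2)⁻¹ * ε * ε := by field_simp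
        _ ≤ a * ε * t := by gcongr
    have : 0 ≤ (t - ε) * (a * ε * t - 1) / (ε * t) :=
      div_nonneg (mul_nonneg (by linarith) (by linarith)) (by positivity)
    nlinarith [show (t - ε) * (a * ε * t - 1) / (ε * t) = 1 / t - 1 + a * t - (ε * a + ε⁻¹ - 1) by
      field_simp; ring]

include hε1

lemma phiMinimizer_mem_Icc (a : ℝ) : phiMinimizer ε a ∈ Icc ε 1 := by
  unfold phiMinimizer
  split_ifs with h1 h2
  · exact ⟨hε1.le, le_rfl⟩
  · rw [not_le] at h1
    have hs1 : 1 < Real.sqrt a := Real.lt_sqrt (by norm_num) |>.2 (by simpa using h1)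
    have hsε : Real.sqrt a < ε⁻¹ := by
      rw [Real.sqrt_lt' (by positivity), inv_pow]; exact h2
    exact ⟨(le_inv_comm₀ hε0 (by linarith)).2 hsε.le, inv_le_one_of_one_le₀ hs1.le⟩
  · exact ⟨le_rfl, hε1.le⟩

lemma phi_eq_at_phiMinimizer (a : ℝ) :
    1 / phiMinimizer ε a - 1 + a * phiMinimizer ε a = phi ε a := by
  unfold phiMinimizer phi
  split_ifs with h1 h2
  · ring
  · have hs0 : 0 < Real.sqrt a := Real.sqrt_pos.2 (by linarith)
    have hs2 : Real.sqrt a ^ 2 = a := Real.sq_sqrt (by linarith)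
    field_simp
    linear_combination -hs2
  · field_simp
    ring

lemma isLeast_phi (a : ℝ) :
    IsLeast ((fun t => 1 / t - 1 + a * t) '' Icc ε 1) (phi ε a) :=
  ⟨⟨_, phiMinimizer_mem_Icc hε0 hε1 a, phi_eq_at_phiMinimizer hε0 hε1 a⟩,
    forall_mem_image.2 fun _ ht => phi_le_of_mem_Icc hε0 ht⟩

lemma phi_monotone : Monotone (phi ε) := fun x y hxy => by
  have ht := phiMinimizer_mem_Icc hε0 hε1 y
  calc phi ε x ≤ 1 / phiMinimizer ε y - 1 + x * phiMinimizer ε y := phi_le_of_mem_Icc hε0 ht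
    _ ≤ 1 / phiMinimizer ε y - 1 + y * phiMinimizer ε y := by gcongr; exact hε0.le.trans ht.1
    _ = phi ε y := phi_eq_at_phiMinimizer hε0 hε1 y

lemma isLeast_weighted_phi {w l : ℝ} (hw : 0 ≤ w) (hl : 0 < l) (q : ℝ) :
    IsLeast ((fun t => w / l * (1 / t - 1) + q * (w * t)) '' Icc ε 1) (w / l * phi ε (l * q)) := by
  have hfun : (fun t => w / l * (1 / t - 1) + q * (w * t)) =
      fun t => w / l * (1 / t - 1 + l * q * t) := funext fun t => by
    field_simp
  rw [hfun, ← image_image (w / l * ·)]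
  exact (monotone_mul_left_of_nonneg (div_nonneg hw hl.le)).map_isLeast
    (isLeast_phi hε0 hε1 (l * q))

variable {ι : Type*} [Fintype ι] {w l : ι → ℝ} (hw : ∀ j, 0 ≤ w j)
include hw

lemma monotone_sum_mul_phi (hl : ∀ j, 0 ≤ l j) :
    Monotone fun q => ∑ j, w j / l j * phi ε (l j * q) := fun _ _ hq =>
  Finset.sum_le_sum fun j _ => by
    gcongr
    · exact div_nonneg (hw j) (hl j)
    · exact phi_monotone hε0 hε1 (by gcongr; exact hl j)

lemma isLeast_sum_mul_phi (hl : ∀ j, 0 < l j) (q : ℝ) :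
    IsLeast ((fun b => ∑ j, w j / l j * (1 / b j - 1) + q * ∑ j, w j * b j) ''
      univ.pi fun _ => Icc ε 1) (∑ j, w j / l j * phi ε (l j * q)) := by
  simp only [Finset.mul_sum, ← Finset.sum_add_distrib]
  exact isLeast_sum_image_pi fun j => isLeast_weighted_phi hε0 hε1 (hw j) (hl j) q

end Envelope

lemma sq_max_neg_add_self (c : ℝ) : (max (-c) 0 + c) ^ 2 = c ^ 2 * if 0 ≤ c then 1 else 0 := by
  rcases le_or_gt 0 c with hc | hc
  · simp [hc]
  · simp [hc.le, not_le.2 hc]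

lemma sq_max_neg_add_sq_mul_ite (c : ℝ) :
    max (-c) 0 ^ 2 + c ^ 2 * (if 0 ≤ c then 1 else 0) = c ^ 2 := by
  rcases le_or_gt 0 c with hc | hc
  · simp [hc]
  · simp [hc.le, not_le.2 hc]

lemma sq_max_neg_add_le (c z : ℝ) : (max (-c) 0 + c) ^ 2 ≤ (max (-z) 0 + c) ^ 2 := by
  rcases le_or_gt 0 c with hc | hc
  · rw [max_eq_right (by linarith)]
    nlinarith [le_max_right (-z) 0]
  · rw [max_eq_left (by linarith)]
    nlinarith

theorem risk_neutral_consumer_second_best_general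
    (d : ℕ) (σ lam : Fin d → ℝ)
    (hlam : ∀ j, 0 < lam j)
    (ε : ℝ) (hε : ε ∈ Set.Ioo (0 : ℝ) 1)
    (B : Set (Fin d → ℝ)) (hB : B = {b | ∀ j, b j ∈ Set.Icc ε 1})
    (c₂ : (Fin d → ℝ) → ℝ)
    (hc₂ : c₂ = fun b => ∑ j, (σ j) ^ 2 / lam j * (1 / b j - 1))
    (σsq : (Fin d → ℝ) → ℝ) (hσsq : σsq = fun b => ∑ j, (σ j) ^ 2 * b j)
    (Hv : ℝ → ℝ)
    (hHv : Hv = fun γ => -(1 / 2) * sInf ((fun b => c₂ b - γ * σsq b) '' B))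
    (φ : ℝ → ℝ)
    (hφ : φ = fun x =>
      if x ≤ 1 then x else if x < (ε ^ 2)⁻¹ then 2 * Real.sqrt x - 1 else ε * x + ε⁻¹ - 1)
    (F₀ : ℝ → ℝ) (hF₀ : F₀ = fun q => ∑ j, (σ j) ^ 2 / lam j * φ (lam j * q))
    (h p μbar c : ℝ) (hp : 0 < p) (hμbar : 0 < μbar)
    (G : ℝ → ℝ)
    (hG : G = fun z => F₀ (h + p * (z - c) ^ 2) + μbar * (max (-z) 0 + c) ^ 2) :
    (∀ z : ℝ, G c ≤ G z) ∧
      sInf (Set.range G) = F₀ h + μbar * c ^ 2 * (if 0 ≤ c then 1 else 0) ∧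
      (1 / 2) * μbar * c ^ 2 - (1 / 2) * sInf (Set.range G) =
        (1 / 2) * μbar * (max (-c) 0) ^ 2 + Hv (-h) := by
  obtain ⟨hε0, hε1⟩ := hε
  replace hφ : φ = phi ε := hφ
  have hF₀_mono : Monotone F₀ := hF₀ ▸ hφ ▸
    monotone_sum_mul_phi hε0 hε1 (fun j => sq_nonneg (σ j)) fun j => (hlam j).le
  have hG_least : IsLeast (range G) (G c) := by
    refine ⟨mem_range_self c, forall_mem_range.2 fun z => ?_⟩
    simp only [hG, sub_self]
    gcongr ?_ + μbar * ?_
    · exact hF₀_mono (by nlinarith [sq_nonneg (z - c)])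
    · exact sq_max_neg_add_le c z
  have hGc : G c = F₀ h + μbar * c ^ 2 * (if 0 ≤ c then 1 else 0) := by
    simp [hG, sq_max_neg_add_self]
  have hHv_h : Hv (-h) = -(1 / 2) * F₀ h := by
    have hB_pi : B = univ.pi fun _ => Icc ε 1 := by
      rw [hB]; ext; exact mem_univ_pi.symm
    simp only [hHv, hF₀, hφ, hc₂, hσsq, hB_pi, neg_mul, sub_neg_eq_add,
      (isLeast_sum_mul_phi hε0 hε1 (fun j => sq_nonneg (σ j)) hlam h).csInf_eq]
  refine ⟨forall_mem_range.1 hG_least.2, ?_, ?_⟩ <;> rw [hG_least.csInf_eq, hGc]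
  rw [hHv_h]
  linear_combination (-(μbar / 2)) * sq_max_neg_add_sq_mul_ite c

/-- With a risk-neutral consumer (`r = 0`),
`inf_z { F₀(h + p(z−c)²) + μ̄(z⁻+c)² } = F₀(h) + μ̄c²·𝟙_{c≥0}`, attained at `z = c`; hence
`(1/2)μ̄c² − (1/2) inf_z {…} = (1/2)μ̄(c⁻)² + H_v(−h)`: the second-best HJB nonlinearity
coincides with the first-best one. -/
theorem risk_neutral_consumer_second_best
    (d : ℕ) (hd : 1 ≤ d) (σ lam : Fin d → ℝ)
    (hσ : ∀ j, 0 < σ j) (hlam : ∀ j, 0 < lam j)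
    (ε : ℝ) (hε : ε ∈ Set.Ioo (0 : ℝ) 1)
    (B : Set (Fin d → ℝ)) (hB : B = {b | ∀ j, b j ∈ Set.Icc ε 1})
    (c₂ : (Fin d → ℝ) → ℝ)
    (hc₂ : c₂ = fun b => ∑ j, (σ j) ^ 2 / lam j * (1 / b j - 1))
    (σsq : (Fin d → ℝ) → ℝ) (hσsq : σsq = fun b => ∑ j, (σ j) ^ 2 * b j)
    (Hv : ℝ → ℝ)
    (hHv : Hv = fun γ => -(1 / 2) * sInf ((fun b => c₂ b - γ * σsq b) '' B))
    (φ : ℝ → ℝ)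
    (hφ : φ = fun x =>
      if x ≤ 1 then x else if x < (ε ^ 2)⁻¹ then 2 * Real.sqrt x - 1 else ε * x + ε⁻¹ - 1)
    (F₀ : ℝ → ℝ) (hF₀ : F₀ = fun q => ∑ j, (σ j) ^ 2 / lam j * φ (lam j * q))
    (h p μbar c : ℝ) (hh : 0 ≤ h) (hp : 0 < p) (hμbar : 0 < μbar)
    (G : ℝ → ℝ)
    (hG : G = fun z => F₀ (h + p * (z - c) ^ 2) + μbar * (max (-z) 0 + c) ^ 2) :
    (∀ z : ℝ, G c ≤ G z) ∧
      sInf (Set.range G) = F₀ h + μbar * c ^ 2 * (if 0 ≤ c then 1 else 0) ∧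
      (1 / 2) * μbar * c ^ 2 - (1 / 2) * sInf (Set.range G) =
        (1 / 2) * μbar * (max (-c) 0) ^ 2 + Hv (-h) :=
  risk_neutral_consumer_second_best_general d σ lam hlam ε hε B hB c₂ hc₂ σsq hσsq Hv hHv φ hφ F₀
    hF₀ h p μbar c hp hμbar G hG
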